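/- There exists a constant C_K > 0, depending only on m, c₀ and C_h, such that |f(t)| ≤ C_K h^{-1/2} ‖f‖ for every f ∈ ℋ and every t ∈ [0,1]; that is, sup_{t∈[0,1]} |f(t)| ≤ C_K h^{-1/2} ‖f‖ for all f ∈ ℋ. -/

import Mathlib

/-!
By the reproducing property, `|f t| = |⟪K t, f⟫| ≤ ‖K t‖ ‖f‖`. The system `(h_v)` is orthogonal
for `⟪·, ·⟫` with `⟪h_v, h_v⟫ = 1 + λ γ_v`, so expanding `K t` in it gives
`‖K t‖² = ∑ h_v(t)² / (1 + λ γ_v) ≤ C_h² ∑ (1 + λ c₀ (v + 1)^p)⁻¹` with `p = 2m > 1`.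
Since `(1 + y)^p ≤ 2^(p-1) (1 + y^p)`, the summands are dominated by the decreasing function
`2^(p-1) (1 + (λ c₀)^(1/p) x)^(-p)` at `x = v + 1`, whose integral over `[0, ∞)` is
`2^(p-1) / ((p - 1) (λ c₀)^(1/p))`, a constant times `h⁻¹`.
-/

open scoped RealInnerProductSpace
open MeasureTheory

noncomputable section

/-- The RKHS framework of the paper: a real Hilbert space `H` of functions on `[0,1]`
(with evaluation map `ev`), whose inner product is `⟪f, g⟫ = V f g + lam * J f g` for
symmetric positive-semidefinite bilinear forms `V` and `J`, together with a simultaneously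
orthogonal system `hvec` with eigenvalues `γ`, uniformly bounded by `Ch`, in which every
element expands, a reproducing kernel `K`, and the operator `W = W_lam` determined by
`⟪W f, g⟫ = lam * J f g`. -/
structure RKHSContext (lam : ℝ) (H : Type*) [NormedAddCommGroup H] [InnerProductSpace ℝ H] where
  ev : H → ℝ → ℝ
  V : H →ₗ[ℝ] H →ₗ[ℝ] ℝ
  J : H →ₗ[ℝ] H →ₗ[ℝ] ℝ
  V_symm : ∀ f g : H, V f g = V g f
  J_symm : ∀ f g : H, J f g = J g f
  V_nonneg : ∀ f : H, 0 ≤ V f f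
  J_nonneg : ∀ f : H, 0 ≤ J f f
  inner_eq : ∀ f g : H, ⟪f, g⟫ = V f g + lam * J f g
  hvec : ℕ → H
  γ : ℕ → ℝ
  γ_pos : ∀ v, 0 < γ v
  Ch : ℝ
  hvec_bound : ∀ v : ℕ, ∀ t ∈ Set.Icc (0:ℝ) 1, |ev (hvec v) t| ≤ Ch
  V_orth : ∀ u v : ℕ, V (hvec u) (hvec v) = if u = v then 1 else 0
  J_orth : ∀ u v : ℕ, J (hvec u) (hvec v) = if u = v then γ u else 0
  expansion : ∀ g : H, HasSum (fun v => V g (hvec v) • hvec v) g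
  K : ℝ → H
  reproducing : ∀ t ∈ Set.Icc (0:ℝ) 1, ∀ f : H, ⟪K t, f⟫ = ev f t
  W : H →ₗ[ℝ] H
  W_spec : ∀ f g : H, ⟪W f, g⟫ = lam * J f g

lemma Real.rpow_add_le_mul_rpow_add_rpow {x y p : ℝ} (hx : 0 ≤ x) (hy : 0 ≤ y) (hp : 1 ≤ p) :
    (x + y) ^ p ≤ 2 ^ (p - 1) * (x ^ p + y ^ p) := by
  lift x to NNReal using hx
  lift y to NNReal using hy
  exact_mod_cast NNReal.rpow_add_le_mul_rpow_add_rpow x y hp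

lemma Real.rpow_neg_one_half_sq {x : ℝ} (hx : 0 ≤ x) : (x ^ (-(1 / 2) : ℝ)) ^ 2 = x⁻¹ := by
  rw [← Real.rpow_natCast, ← Real.rpow_mul hx]
  norm_num [Real.rpow_neg_one]

lemma inv_one_add_mul_rpow_le {a x p : ℝ} (ha : 0 ≤ a) (hx : 0 ≤ x) (hp : 1 ≤ p) :
    (1 + a * x ^ p)⁻¹ ≤ 2 ^ (p - 1) * (1 + a ^ (1 / p) * x) ^ (-p) := by
  set y := a ^ (1 / p) * x
  have hy : 0 ≤ y := by positivity
  have hyp : y ^ p = a * x ^ p := by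
    rw [Real.mul_rpow (by positivity) hx, one_div, Real.rpow_inv_rpow ha (by linarith)]
  have hconvex := Real.rpow_add_le_mul_rpow_add_rpow zero_le_one hy hp
  rw [Real.one_rpow, hyp] at hconvex
  calc (1 + a * x ^ p)⁻¹ = 2 ^ (p - 1) * (2 ^ (p - 1) * (1 + a * x ^ p))⁻¹ := by
        field_simp
    _ ≤ 2 ^ (p - 1) * ((1 + y) ^ p)⁻¹ := by gcongr
    _ = 2 ^ (p - 1) * (1 + y) ^ (-p) := by rw [Real.rpow_neg (by positivity)]

lemma sum_range_one_add_mul_rpow_neg_le {b p : ℝ} (hb : 0 < b) (hp : 1 < p) (n : ℕ) :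
    ∑ i ∈ Finset.range n, (1 + b * ((i : ℝ) + 1)) ^ (-p) ≤ 1 / (b * (p - 1)) := by
  have hanti : AntitoneOn (fun x : ℝ => (1 + b * x) ^ (-p)) (Set.Icc 0 (0 + n)) := by
    intro x hx y _ hxy
    have hx0 : 0 ≤ x := hx.1
    exact Real.rpow_le_rpow_of_nonpos (by positivity) (by gcongr) (by linarith)
  have hint : ∫ x in (0 : ℝ)..n, (1 + b * x) ^ (-p) =
      b⁻¹ * ((1 - (1 + b * n) ^ (1 - p)) / (p - 1)) := by
    have hpos : ∀ x ∈ Set.uIcc (1 + b * 0) (1 + b * n), 0 < x := by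
      rw [Set.uIcc_of_le (by gcongr; positivity)]
      intro x hx
      linarith [hx.1]
    rw [intervalIntegral.integral_comp_add_mul (fun y : ℝ => y ^ (-p)) hb.ne',
      integral_rpow (Or.inr ⟨by linarith, fun h0 => (hpos 0 h0).false⟩),
      smul_eq_mul, mul_zero, add_zero, Real.one_rpow, neg_add_eq_sub, ← neg_div_neg_eq,
      neg_sub, neg_sub]
  calc ∑ i ∈ Finset.range n, (1 + b * ((i : ℝ) + 1)) ^ (-p)
      ≤ ∫ x in (0 : ℝ)..0 + n, (1 + b * x) ^ (-p) := by
        simpa only [zero_add, Nat.cast_add, Nat.cast_one] using hanti.sum_le_integral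
    _ ≤ b⁻¹ * (1 / (p - 1)) := by
        rw [zero_add, hint]
        have : 0 ≤ (1 + b * n) ^ (1 - p) := by positivity
        gcongr
        linarith
    _ = 1 / (b * (p - 1)) := by field_simp

lemma sum_range_inv_one_add_mul_rpow_le {a p : ℝ} (ha : 0 < a) (hp : 1 < p) (n : ℕ) :
    ∑ v ∈ Finset.range n, (1 + a * ((v : ℝ) + 1) ^ p)⁻¹ ≤ 2 ^ (p - 1) / (a ^ (1 / p) * (p - 1)) :=
  calc ∑ v ∈ Finset.range n, (1 + a * ((v : ℝ) + 1) ^ p)⁻¹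
      ≤ ∑ v ∈ Finset.range n, 2 ^ (p - 1) * (1 + a ^ (1 / p) * ((v : ℝ) + 1)) ^ (-p) :=
        Finset.sum_le_sum fun v _ => inv_one_add_mul_rpow_le ha.le (by positivity) hp.le
    _ ≤ 2 ^ (p - 1) * (1 / (a ^ (1 / p) * (p - 1))) := by
        rw [← Finset.mul_sum]
        gcongr
        exact sum_range_one_add_mul_rpow_neg_le (by positivity) hp n
    _ = 2 ^ (p - 1) / (a ^ (1 / p) * (p - 1)) := mul_one_div _ _

namespace RKHSContext

variable {lam : ℝ} {H : Type*} [NormedAddCommGroup H] [InnerProductSpace ℝ H]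
  (ctx : RKHSContext lam H)

lemma inner_hvec_hvec (u v : ℕ) :
    ⟪ctx.hvec u, ctx.hvec v⟫ = if u = v then 1 + lam * ctx.γ u else 0 := by
  rw [ctx.inner_eq, ctx.V_orth, ctx.J_orth]
  split_ifs <;> ring

lemma inner_hvec (g : H) (v : ℕ) :
    ⟪g, ctx.hvec v⟫ = ctx.V g (ctx.hvec v) * (1 + lam * ctx.γ v) := by
  have h := (ctx.expansion g).mapL (innerSL ℝ (ctx.hvec v))
  simp only [innerSL_apply_apply] at h
  rw [real_inner_comm, h.unique (hasSum_single v fun u hu => ?_)]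
  · rw [real_inner_smul_right, inner_hvec_hvec, if_pos rfl]
  · rw [real_inner_smul_right, inner_hvec_hvec, if_neg (Ne.symm hu), mul_zero]

lemma hasSum_inner_K_self {t : ℝ} (ht : t ∈ Set.Icc (0 : ℝ) 1) :
    HasSum (fun v => ctx.ev (ctx.hvec v) t ^ 2 / (1 + lam * ctx.γ v)) ⟪ctx.K t, ctx.K t⟫ := by
  have h := (ctx.expansion (ctx.K t)).mapL (innerSL ℝ (ctx.K t))
  simp only [innerSL_apply_apply, real_inner_smul_right] at h
  refine h.congr_fun fun v => ?_
  rw [← ctx.reproducing t ht, inner_hvec]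
  rcases eq_or_ne (1 + lam * ctx.γ v) 0 with hv | hv
  · simp [hv]
  · field_simp

lemma norm_K_sq_le {c₀ p : ℝ} (hlam : 0 < lam) (hc₀ : 0 < c₀) (hp : 1 < p)
    (hγ : ∀ v : ℕ, c₀ * ((v : ℝ) + 1) ^ p ≤ ctx.γ v) {t : ℝ} (ht : t ∈ Set.Icc (0 : ℝ) 1) :
    ‖ctx.K t‖ ^ 2 ≤ ctx.Ch ^ 2 * (2 ^ (p - 1) / ((lam * c₀) ^ (1 / p) * (p - 1))) := by
  have hden : ∀ v, 0 < 1 + lam * ctx.γ v := fun v => by have := ctx.γ_pos v; positivity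
  have hterm : ∀ v, ctx.ev (ctx.hvec v) t ^ 2 / (1 + lam * ctx.γ v) ≤
      ctx.Ch ^ 2 * (1 + lam * c₀ * ((v : ℝ) + 1) ^ p)⁻¹ := fun v => by
    have hsq := sq_le_sq.mpr ((ctx.hvec_bound v t ht).trans (le_abs_self _))
    have hγ' : 1 + lam * c₀ * ((v : ℝ) + 1) ^ p ≤ 1 + lam * ctx.γ v := by
      have := mul_le_mul_of_nonneg_left (hγ v) hlam.le
      linarith
    rw [div_eq_mul_inv]
    exact mul_le_mul hsq (inv_anti₀ (by positivity) hγ') (inv_pos.mpr (hden v)).le (sq_nonneg _)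
  rw [← real_inner_self_eq_norm_sq, ← (ctx.hasSum_inner_K_self ht).tsum_eq]
  refine Real.tsum_le_of_sum_range_le (fun v => div_nonneg (sq_nonneg _) (hden v).le) fun n => ?_
  calc ∑ v ∈ Finset.range n, ctx.ev (ctx.hvec v) t ^ 2 / (1 + lam * ctx.γ v)
      ≤ ∑ v ∈ Finset.range n, ctx.Ch ^ 2 * (1 + lam * c₀ * ((v : ℝ) + 1) ^ p)⁻¹ :=
        Finset.sum_le_sum fun v _ => hterm v
    _ ≤ ctx.Ch ^ 2 * (2 ^ (p - 1) / ((lam * c₀) ^ (1 / p) * (p - 1))) := by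
        rw [← Finset.mul_sum]
        gcongr
        exact sum_range_inv_one_add_mul_rpow_le (by positivity) hp n

end RKHSContext

/-- There exists a constant `C_K > 0`, depending only on `m`, `c₀` and
`C_h`, such that `|f(t)| ≤ C_K h^{-1/2} ‖f‖` for every `f ∈ ℋ` and `t ∈ [0,1]`, where
`h = λ^{1/(2m)}` and `γ_v ≥ c₀ v^{2m}`. -/
theorem sup_norm_le (m c₀ Ch : ℝ) (hm : 1/2 < m) (hc₀ : 0 < c₀) :
    ∃ CK : ℝ, 0 < CK ∧
      ∀ (lam : ℝ), 0 < lam →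
        ∀ (H : Type) [NormedAddCommGroup H] [InnerProductSpace ℝ H]
          (ctx : RKHSContext lam H),
          ctx.Ch = Ch →
          (∀ v : ℕ, c₀ * ((v : ℝ) + 1) ^ (2 * m) ≤ ctx.γ v) →
          ∀ (f : H), ∀ t ∈ Set.Icc (0:ℝ) 1,
            |ctx.ev f t| ≤ CK * (lam ^ (1/(2*m))) ^ (-(1/2) : ℝ) * ‖f‖ := by
  set p := 2 * m
  have hp : 1 < p := by linarith
  set D := 2 ^ (p - 1) / (c₀ ^ (1 / p) * (p - 1))
  have hD : 0 < D := by have := sub_pos.mpr hp; positivity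
  refine ⟨(|Ch| + 1) * √D, by positivity, fun lam hlam H _ _ ctx hCh hγ f t ht => ?_⟩
  have hh : 0 < lam ^ (1 / p) := by positivity
  have hK : ‖ctx.K t‖ ≤ (|Ch| + 1) * √D * (lam ^ (1 / p)) ^ (-(1 / 2) : ℝ) := by
    rw [← pow_le_pow_iff_left₀ (norm_nonneg _) (by positivity) two_ne_zero]
    calc ‖ctx.K t‖ ^ 2
        ≤ Ch ^ 2 * (2 ^ (p - 1) / ((lam * c₀) ^ (1 / p) * (p - 1))) :=
          hCh ▸ ctx.norm_K_sq_le hlam hc₀ hp hγ ht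
      _ = Ch ^ 2 * D * (lam ^ (1 / p))⁻¹ := by
          rw [Real.mul_rpow hlam.le hc₀.le]
          simp only [D]
          field_simp
      _ ≤ (|Ch| + 1) ^ 2 * D * (lam ^ (1 / p))⁻¹ := by
          have : Ch ^ 2 ≤ (|Ch| + 1) ^ 2 := by
            rw [← sq_abs]
            gcongr
            linarith
          gcongr
      _ = ((|Ch| + 1) * √D * (lam ^ (1 / p)) ^ (-(1 / 2) : ℝ)) ^ 2 := by
          rw [mul_pow, mul_pow, Real.sq_sqrt hD.le, Real.rpow_neg_one_half_sq hh.le]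
  calc |ctx.ev f t| = |⟪ctx.K t, f⟫| := by rw [ctx.reproducing t ht]
    _ ≤ ‖ctx.K t‖ * ‖f‖ := abs_real_inner_le_norm _ _
    _ ≤ _ := by gcongr
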